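/- Let H be a graph in the class S (every connected component of H is a path P_r for some r ≥ 1 or a subdivided claw S_{h,i,j} for some 1 ≤ h ≤ i ≤ j). Then H contains no induced subgraph isomorphic to any of 2P_1+2P_2, 2P_1+P_4, 4P_1+P_2, 3P_2, 2P_3 if and only if H is isomorphic to sP_1 for some integer s ≥ 1, or H is isomorphic to an induced subgraph of one of the graphs K_{1,3}+3P_1, K_{1,3}+P_2, P_1+S_{1,1,3}, S_{1,2,3}. -/

import Mathlib

open SimpleGraph

/-- `B` is the black colour class of a black-and-white labelling of `H`:
every edge of `H` joins a vertex of `B` to a vertex outside `B`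
(equivalently, `B` and its complement `Bᶜ` are both independent sets,
i.e. `(B, Bᶜ)` is a bipartition of `H` into two possibly empty independent sets). -/
def IsBWLabelling {V : Type*} (H : SimpleGraph V) (B : Set V) : Prop :=
  ∀ ⦃u v : V⦄, H.Adj u v → (u ∈ B ↔ v ∉ B)

/-- `H` with black class `BH` is a labelled induced subgraph of `G` with black class `BG`:
there is an injective map preserving both adjacency and non-adjacency which maps
black vertices to black vertices and white vertices to white vertices. -/
def LabelledIndSubgraph {VH VG : Type*} (H : SimpleGraph VH) (BH : Set VH)
    (G : SimpleGraph VG) (BG : Set VG) : Prop :=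
  ∃ f : VH → VG, Function.Injective f ∧
    (∀ u v : VH, H.Adj u v ↔ G.Adj (f u) (f v)) ∧
    (∀ u : VH, u ∈ BH ↔ f u ∈ BG)

/-- `G` is strongly `H^ℓ`-free, where `BH` is the black class of the labelling `ℓ`:
there is no bipartition `(BG, BGᶜ)` of `G` such that `H^ℓ` is a labelled induced
subgraph of `(BG, BGᶜ, E_G)`. -/
def StronglyFree {VG VH : Type*} (G : SimpleGraph VG) (H : SimpleGraph VH)
    (BH : Set VH) : Prop :=
  ¬ ∃ BG : Set VG, IsBWLabelling G BG ∧ LabelledIndSubgraph H BH G BG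

/-- `G` is weakly `H^ℓ`-free, where `BH` is the black class of the labelling `ℓ`:
it is not the case that `H^ℓ` is a labelled induced subgraph of `(BG, BGᶜ, E_G)`
for every bipartition `(BG, BGᶜ)` of `G`. -/
def WeaklyFree {VG VH : Type*} (G : SimpleGraph VG) (H : SimpleGraph VH)
    (BH : Set VH) : Prop :=
  ¬ ∀ BG : Set VG, IsBWLabelling G BG → LabelledIndSubgraph H BH G BG

/-- `G` is `H`-free: `G` contains no induced subgraph isomorphic to `H`. -/
def HFree {VG VH : Type*} (G : SimpleGraph VG) (H : SimpleGraph VH) : Prop :=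
  ¬ ∃ f : VH → VG, Function.Injective f ∧ ∀ u v : VH, H.Adj u v ↔ G.Adj (f u) (f v)

/-- The subdivided claw `S_{h,i,j}` (for `1 ≤ h ≤ i ≤ j`): the tree with one centre
vertex `0` of degree `3` and three paths attached to it, with leaves at distance
`h`, `i` and `j` from the centre. The vertices of the three paths are
`1, …, h`, `h+1, …, h+i` and `h+i+1, …, h+i+j`, respectively. -/
def subdividedClaw (h i j : ℕ) : SimpleGraph (Fin (h + i + j + 1)) :=
  SimpleGraph.fromRel (fun a b =>
    (a.val = 0 ∧ (b.val = 1 ∨ b.val = h + 1 ∨ b.val = h + i + 1)) ∨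
    (1 ≤ a.val ∧ b.val = a.val + 1 ∧
      (b.val ≤ h ∨ (h + 1 ≤ a.val ∧ b.val ≤ h + i) ∨
        (h + i + 1 ≤ a.val ∧ b.val ≤ h + i + j))))

/-- `H` belongs to the class `S`: every connected component of `H` is isomorphic
to a path `P_r` for some `r ≥ 1` or to a subdivided claw `S_{h,i,j}` for some
`1 ≤ h ≤ i ≤ j`. -/
def InClassS {V : Type*} (H : SimpleGraph V) : Prop :=
  ∀ c : H.ConnectedComponent,
    (∃ r : ℕ, 1 ≤ r ∧ Nonempty ((H.induce c.supp) ≃g SimpleGraph.pathGraph r)) ∨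
    (∃ h i j : ℕ, 1 ≤ h ∧ h ≤ i ∧ i ≤ j ∧
      Nonempty ((H.induce c.supp) ≃g subdividedClaw h i j))

/-- The graph `2P_1 + 2P_2`: vertices `0, 1` isolated, edges `23` and `45`. -/
def g2P1'2P2 : SimpleGraph (Fin 6) := SimpleGraph.fromEdgeSet {s(2, 3), s(4, 5)}

/-- The graph `2P_1 + P_4`: vertices `0, 1` isolated, path `2-3-4-5`. -/
def g2P1'P4 : SimpleGraph (Fin 6) :=
  SimpleGraph.fromEdgeSet {s(2, 3), s(3, 4), s(4, 5)}

/-- The graph `4P_1 + P_2`: vertices `0, 1, 2, 3` isolated, edge `45`. -/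
def g4P1'P2 : SimpleGraph (Fin 6) := SimpleGraph.fromEdgeSet {s(4, 5)}

/-- The graph `3P_2`: three disjoint edges `01`, `23`, `45`. -/
def g3P2 : SimpleGraph (Fin 6) :=
  SimpleGraph.fromEdgeSet {s(0, 1), s(2, 3), s(4, 5)}

/-- The graph `2P_3`: two disjoint paths `0-1-2` and `3-4-5`. -/
def g2P3 : SimpleGraph (Fin 6) :=
  SimpleGraph.fromEdgeSet {s(0, 1), s(1, 2), s(3, 4), s(4, 5)}

/-- The graph `K_{1,3} + 3P_1`: a claw with centre `0` and leaves `1, 2, 3`,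
plus isolated vertices `4, 5, 6`. -/
def gK13'3P1 : SimpleGraph (Fin 7) :=
  SimpleGraph.fromEdgeSet {s(0, 1), s(0, 2), s(0, 3)}

/-- The graph `K_{1,3} + P_2`: a claw with centre `0` and leaves `1, 2, 3`,
plus the edge `45`. -/
def gK13'P2 : SimpleGraph (Fin 6) :=
  SimpleGraph.fromEdgeSet {s(0, 1), s(0, 2), s(0, 3), s(4, 5)}

/-- The graph `P_1 + S_{1,1,3}`: an isolated vertex `0`, plus a subdivided claw with
centre `1`, two leaves `2, 3` at distance one and the path `1-4-5-6`. -/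
def gP1'S113 : SimpleGraph (Fin 7) :=
  SimpleGraph.fromEdgeSet {s(1, 2), s(1, 3), s(1, 4), s(4, 5), s(5, 6)}

/-- The graph `S_{1,2,3}`. -/
def gS123 : SimpleGraph (Fin 7) := subdividedClaw 1 2 3

/-!
A component of `H ∈ S` that contains an edge is a path `P_r` or a claw `S_{h,i,j}`;
`2P_3`-freeness forces `r ≤ 6` and `j ≤ 3`, and `3P_2`-freeness forces `h = 1` and `i ≤ 2`.
By `3P_2`-freeness at most two components contain edges, and by `2P_3`-freeness one of them is a
single edge if there are two. Hence `H ≅ A + kP_1` or `H ≅ A + P_2 + kP_1` for one of ten small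
graphs `A`. In each case one forbidden graph bounds `k`, and at that bound the graph is an induced
subgraph of one of the four maximal graphs. Conversely, the four maximal graphs are checked to be
free of the five forbidden graphs by an exhaustive search.
-/

instance (n : ℕ) : DecidableRel (pathGraph n).Adj := fun _ _ => decidable_of_iff' _ pathGraph_adj

instance (h i j : ℕ) : DecidableRel (subdividedClaw h i j).Adj :=
  inferInstanceAs (DecidableRel (fromRel _).Adj)

instance {α β : Type*} (A : SimpleGraph α) (B : SimpleGraph β) [DecidableRel A.Adj]
    [DecidableRel B.Adj] : DecidableRel (A ⊕g B).Adj
  | .inl a, .inl b => inferInstanceAs (Decidable (A.Adj a b))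
  | .inr a, .inr b => inferInstanceAs (Decidable (B.Adj a b))
  | .inl _, .inr _ => isFalse (by simp)
  | .inr _, .inl _ => isFalse (by simp)

instance : DecidableRel g2P1'2P2.Adj := inferInstanceAs (DecidableRel (fromEdgeSet _).Adj)
instance : DecidableRel g2P1'P4.Adj := inferInstanceAs (DecidableRel (fromEdgeSet _).Adj)
instance : DecidableRel g4P1'P2.Adj := inferInstanceAs (DecidableRel (fromEdgeSet _).Adj)
instance : DecidableRel g3P2.Adj := inferInstanceAs (DecidableRel (fromEdgeSet _).Adj)
instance : DecidableRel g2P3.Adj := inferInstanceAs (DecidableRel (fromEdgeSet _).Adj)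
instance : DecidableRel gK13'3P1.Adj := inferInstanceAs (DecidableRel (fromEdgeSet _).Adj)
instance : DecidableRel gK13'P2.Adj := inferInstanceAs (DecidableRel (fromEdgeSet _).Adj)
instance : DecidableRel gP1'S113.Adj := inferInstanceAs (DecidableRel (fromEdgeSet _).Adj)
instance : DecidableRel gS123.Adj := inferInstanceAs (DecidableRel (subdividedClaw 1 2 3).Adj)

section InducedCopies

variable {V W α : Type*} {G : SimpleGraph V} {A : SimpleGraph α}

theorem hFree_iff_not_isIndContained : HFree G A ↔ ¬ A ⊴ G :=
  not_congr ⟨fun ⟨f, hf, hadj⟩ => ⟨⟨⟨f, hf⟩, (hadj _ _).symm⟩⟩,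
    fun ⟨e⟩ => ⟨e, e.injective, fun _ _ => e.map_rel_iff.symm⟩⟩

theorem HFree.anti {H : SimpleGraph W} (hG : HFree G A) (hHG : H ⊴ G) : HFree H A :=
  hFree_iff_not_isIndContained.2 fun hA => hFree_iff_not_isIndContained.1 hG (hA.trans hHG)

/-- The partial copy of `X` in `T` sending `σ a` to `f a` extends by sending `u` to `b`. -/
def IsExtension {n k : ℕ} (X : SimpleGraph (Fin n)) (T : SimpleGraph W) (σ : Fin k → Fin n)
    (f : Fin k → W) (u : Fin n) (b : W) : Prop :=
  ∀ a, f a ≠ b ∧ (T.Adj (f a) b ↔ X.Adj (σ a) u)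

instance {n k : ℕ} [DecidableEq W] (X : SimpleGraph (Fin n)) (T : SimpleGraph W)
    [DecidableRel X.Adj] [DecidableRel T.Adj] (σ : Fin k → Fin n) (f : Fin k → W) (u : Fin n)
    (b : W) : Decidable (IsExtension X T σ f u b) :=
  Nat.decidableForallFin _

theorem isExtension_of_embedding {n k : ℕ} {X : SimpleGraph (Fin n)} {T : SimpleGraph W}
    (e : X ↪g T) {σ : Fin k → Fin n} {u : Fin n} (hu : ∀ a, σ a ≠ u) {f : Fin k → W}
    (hf : ∀ a, f a = e (σ a)) : IsExtension X T σ f u (e u) :=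
  fun a => ⟨hf a ▸ e.injective.ne (hu a), hf a ▸ e.map_adj_iff⟩

/-- The search is stated vertex by vertex so that `decide` abandons a partial copy as soon as it
fails, instead of running through all maps `Fin 6 → W`. The order `5, 4, …, 0` places the edges
of the forbidden graphs first, where they prune most. -/
theorem hFree_of_forall_isExtension {X : SimpleGraph (Fin 6)} {T : SimpleGraph W}
    (h : ∀ a₀ a₁, IsExtension X T ![5] ![a₀] 4 a₁ →
      ∀ a₂, IsExtension X T ![5, 4] ![a₀, a₁] 3 a₂ →
      ∀ a₃, IsExtension X T ![5, 4, 3] ![a₀, a₁, a₂] 2 a₃ →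
      ∀ a₄, IsExtension X T ![5, 4, 3, 2] ![a₀, a₁, a₂, a₃] 1 a₄ →
      ∀ a₅, ¬ IsExtension X T ![5, 4, 3, 2, 1] ![a₀, a₁, a₂, a₃, a₄] 0 a₅) :
    HFree T X :=
  hFree_iff_not_isIndContained.2 fun ⟨e⟩ =>
    h _ _ (isExtension_of_embedding e (by decide) fun a => by fin_cases a; rfl)
      _ (isExtension_of_embedding e (by decide) fun a => by fin_cases a <;> rfl)
      _ (isExtension_of_embedding e (by decide) fun a => by fin_cases a <;> rfl)
      _ (isExtension_of_embedding e (by decide) fun a => by fin_cases a <;> rfl)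
      _ (isExtension_of_embedding e (by decide) fun a => by fin_cases a <;> rfl)

end InducedCopies

namespace SimpleGraph

variable {V α β : Type*} {G : SimpleGraph V} {A : SimpleGraph α} {B : SimpleGraph β}

theorem isIndContained_of_adj_iff (f : α → β) (hf : f.Injective := by decide)
    (hadj : ∀ a b, B.Adj (f a) (f b) ↔ A.Adj a b := by decide) : A ⊴ B :=
  ⟨⟨⟨f, hf⟩, hadj _ _⟩⟩

theorem induce_isIndContained (s : Set V) : G.induce s ⊴ G := ⟨Embedding.induce s⟩

theorem pathGraph_two_isIndContained {x y : V} (h : G.Adj x y) : pathGraph 2 ⊴ G := by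
  refine isIndContained_of_adj_iff ![x, y] (fun a b hab => ?_) fun a b => ?_
  · fin_cases a <;> fin_cases b <;> simp_all [h.ne, h.ne.symm]
  · fin_cases a <;> fin_cases b <;> simp [h, h.symm, pathGraph_adj]

theorem pathGraph_isIndContained_pathGraph {m n : ℕ} (h : m ≤ n) : pathGraph m ⊴ pathGraph n :=
  isIndContained_of_adj_iff (Fin.castLE h) (Fin.castLE_injective h) fun a b => by
    simp [pathGraph_adj]

theorem two_le_of_iso_pathGraph {r : ℕ} (e : G ≃g pathGraph r) {u v : V} (h : G.Adj u v) :
    2 ≤ r := by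
  have := pathGraph_adj.1 (e.map_adj_iff.2 h)
  have := (e u).2
  have := (e v).2
  omega

theorem sum_emptyGraph_isIndContained {m n : ℕ} (h : m ≤ n) :
    A ⊕g emptyGraph (Fin m) ⊴ A ⊕g emptyGraph (Fin n) :=
  ⟨Embedding.refl.sum ⟨Fin.castLEEmb h, Iff.rfl⟩⟩

noncomputable def Iso.emptyGraphOfForallNotAdj [Fintype V] (h : ∀ u v, ¬ G.Adj u v) :
    G ≃g emptyGraph (Fin (Fintype.card V)) where
  toEquiv := Fintype.equivFin V
  map_rel_iff' {u v} := iff_of_false id (h u v)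

def Iso.induceUnion {s t : Set V} [DecidablePred (· ∈ s)] (hst : Disjoint s t)
    (hadj : ∀ u ∈ s, ∀ v ∈ t, ¬ G.Adj u v) :
    G.induce (s ∪ t) ≃g G.induce s ⊕g G.induce t where
  toEquiv := Equiv.Set.union hst
  map_rel_iff' {a b} := by
    rcases a.2 with ha | ha <;> rcases b.2 with hb | hb
    · simp [Equiv.Set.union_apply_left hst ha, Equiv.Set.union_apply_left hst hb]
    · simp [Equiv.Set.union_apply_left hst ha, Equiv.Set.union_apply_right hst hb, hadj _ ha _ hb]
    · simpa [Equiv.Set.union_apply_right hst ha, Equiv.Set.union_apply_left hst hb]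
        using fun h : G.Adj a b => hadj _ hb _ ha h.symm
    · simp [Equiv.Set.union_apply_right hst ha, Equiv.Set.union_apply_right hst hb]

noncomputable def Iso.induceUnionOfNotReachable {s t : Set V}
    (hst : ∀ u ∈ s, ∀ v ∈ t, ¬ G.Reachable u v) :
    G.induce (s ∪ t) ≃g G.induce s ⊕g G.induce t :=
  haveI := Classical.decPred (· ∈ s)
  Iso.induceUnion (Set.disjoint_left.2 fun u hs ht => hst u hs u ht .rfl)
    fun u hu v hv h => hst u hu v hv h.reachable

theorem sum_isIndContained_induce_union {s t : Set V}
    (hst : ∀ u ∈ s, ∀ v ∈ t, ¬ G.Reachable u v) (hA : A ⊴ G.induce s) (hB : B ⊴ G.induce t) :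
    A ⊕g B ⊴ G.induce (s ∪ t) :=
  let ⟨eA⟩ := hA
  let ⟨eB⟩ := hB
  ⟨(Iso.induceUnionOfNotReachable hst).symm.toEmbedding.comp (eA.sum eB)⟩

theorem exists_iso_induce_sum_emptyGraph [Finite V] (s : Set V)
    (hs : ∀ u v, G.Adj u v → u ∈ s) :
    ∃ k, Nonempty (G ≃g G.induce s ⊕g emptyGraph (Fin k)) := by
  classical
  have := Fintype.ofFinite V
  have e := Iso.induceUnion (G := G) (disjoint_compl_right (a := s))
    fun u _ v hv huv => hv (hs v u huv.symm)
  rw [Set.union_compl_self] at e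
  exact ⟨_, ⟨(induceUnivIso G).symm.trans (e.trans (Iso.sumCongr .refl
    (Iso.emptyGraphOfForallNotAdj fun u _ huv => u.2 (hs u _ huv))))⟩⟩

namespace ConnectedComponent

theorem not_reachable_of_ne {c c' : G.ConnectedComponent} (h : c ≠ c') {u v : V}
    (hu : u ∈ c.supp) (hv : v ∈ c'.supp) : ¬ G.Reachable u v :=
  fun huv => h (hu ▸ hv ▸ ConnectedComponent.sound huv)

theorem pathGraph_two_isIndContained_induce {c : G.ConnectedComponent} {x y : V}
    (hx : x ∈ c.supp) (hxy : G.Adj x y) : pathGraph 2 ⊴ G.induce c.supp :=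
  pathGraph_two_isIndContained (G := G.induce c.supp) (x := ⟨x, hx⟩)
    (y := ⟨y, (c.mem_supp_congr_adj hxy).1 hx⟩) hxy

end ConnectedComponent

end SimpleGraph

theorem subdividedClaw_adj {h i j : ℕ} {a b : Fin (h + i + j + 1)} :
    (subdividedClaw h i j).Adj a b ↔ a.val ≠ b.val ∧
      (((a.val = 0 ∧ (b.val = 1 ∨ b.val = h + 1 ∨ b.val = h + i + 1)) ∨
        (1 ≤ a.val ∧ b.val = a.val + 1 ∧ (b.val ≤ h ∨ (h + 1 ≤ a.val ∧ b.val ≤ h + i) ∨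
          (h + i + 1 ≤ a.val ∧ b.val ≤ h + i + j)))) ∨
       ((b.val = 0 ∧ (a.val = 1 ∨ a.val = h + 1 ∨ a.val = h + i + 1)) ∨
        (1 ≤ b.val ∧ a.val = b.val + 1 ∧ (a.val ≤ h ∨ (h + 1 ≤ b.val ∧ a.val ≤ h + i) ∨
          (h + i + 1 ≤ b.val ∧ a.val ≤ h + i + j))))) := by
  rw [subdividedClaw, fromRel_adj, Ne, Ne, Fin.ext_iff]

theorem subdividedClaw_isIndContained_subdividedClaw {h i j h' i' j' : ℕ} (hh : h' ≤ h)
    (hi : i' ≤ i) (hj : j' ≤ j) : subdividedClaw h' i' j' ⊴ subdividedClaw h i j := by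
  refine isIndContained_of_adj_iff (fun a => ⟨if a.val ≤ h' then a.val
      else if a.val ≤ h' + i' then a.val - h' + h else a.val - h' - i' + h + i,
      by split_ifs <;> omega⟩) (fun a b hab => ?_) fun a b => ?_
  · simp only [Fin.mk.injEq] at hab
    ext
    split_ifs at hab <;> omega
  · rw [subdividedClaw_adj, subdividedClaw_adj]
    dsimp only
    split_ifs <;> omega

section Classification

variable {V : Type*} {H : SimpleGraph V}

theorem InClassS.nonempty_iso_pathGraph_two_or_isIndContained (hS : InClassS H)
    {c : H.ConnectedComponent} {x y : V} (hx : x ∈ c.supp) (hxy : H.Adj x y) :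
    Nonempty (H.induce c.supp ≃g pathGraph 2) ∨ pathGraph 3 ⊴ H.induce c.supp := by
  have hy := (c.mem_supp_congr_adj hxy).1 hx
  rcases hS c with ⟨r, -, ⟨φ⟩⟩ | ⟨h, i, j, hh, hhi, hij, ⟨φ⟩⟩
  · rcases (two_le_of_iso_pathGraph φ (u := ⟨x, hx⟩) (v := ⟨y, hy⟩) hxy).eq_or_lt with rfl | hr
    · exact .inl ⟨φ⟩
    · exact .inr ((pathGraph_isIndContained_pathGraph hr).trans φ.symm.isIndContained)
  · have hP3 : pathGraph 3 ⊴ subdividedClaw 1 1 1 := isIndContained_of_adj_iff ![1, 0, 2]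
    exact .inr ((hP3.trans (subdividedClaw_isIndContained_subdividedClaw hh (by omega)
      (by omega))).trans φ.symm.isIndContained)

theorem InClassS.exists_iso_pathGraph_or_subdividedClaw (hS : InClassS H)
    (h3P2 : HFree H g3P2) (h2P3 : HFree H g2P3)
    {c : H.ConnectedComponent} {x y : V} (hx : x ∈ c.supp) (hxy : H.Adj x y) :
    (∃ r, 2 ≤ r ∧ r ≤ 6 ∧ Nonempty (H.induce c.supp ≃g pathGraph r)) ∨
      ∃ i j, 1 ≤ i ∧ i ≤ j ∧ i ≤ 2 ∧ j ≤ 3 ∧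
        Nonempty (H.induce c.supp ≃g subdividedClaw 1 i j) := by
  have hy := (c.mem_supp_congr_adj hxy).1 hx
  have hc {n : ℕ} {X : SimpleGraph (Fin n)} (hfree : HFree H X) : ¬ X ⊴ H.induce c.supp :=
    fun hX => hFree_iff_not_isIndContained.1 hfree (hX.trans (induce_isIndContained _))
  rcases hS c with ⟨r, -, ⟨φ⟩⟩ | ⟨h, i, j, hh, hhi, hij, ⟨φ⟩⟩
  · refine .inl ⟨r, two_le_of_iso_pathGraph φ (u := ⟨x, hx⟩) (v := ⟨y, hy⟩) hxy, ?_, ⟨φ⟩⟩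
    by_contra! hr
    have h2P3P7 : g2P3 ⊴ pathGraph 7 := isIndContained_of_adj_iff ![0, 1, 2, 4, 5, 6]
    exact hc h2P3 ((h2P3P7.trans (pathGraph_isIndContained_pathGraph hr)).trans
      φ.symm.isIndContained)
  · have hclaw {h' i' j' : ℕ} (hh' : h' ≤ h) (hi' : i' ≤ i) (hj' : j' ≤ j) :
        subdividedClaw h' i' j' ⊴ H.induce c.supp :=
      (subdividedClaw_isIndContained_subdividedClaw hh' hi' hj').trans φ.symm.isIndContained
    have hj : j ≤ 3 := by
      by_contra! hj
      have h2P3S114 : g2P3 ⊴ subdividedClaw 1 1 4 := isIndContained_of_adj_iff ![1, 0, 2, 4, 5, 6]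
      exact hc h2P3 (h2P3S114.trans (hclaw hh (by omega) hj))
    have hi : i ≤ 2 := by
      by_contra! hi
      have h3P2S133 : g3P2 ⊴ subdividedClaw 1 3 3 := isIndContained_of_adj_iff ![0, 1, 3, 4, 6, 7]
      exact hc h3P2 (h3P2S133.trans (hclaw hh hi (by omega)))
    obtain rfl : h = 1 := by
      by_contra! hh'
      have h3P2S222 : g3P2 ⊴ subdividedClaw 2 2 2 := isIndContained_of_adj_iff ![1, 2, 3, 4, 5, 6]
      exact hc h3P2 (h3P2S222.trans (hclaw (by omega) (by omega) (by omega)))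
    exact .inr ⟨i, j, hhi, hij, hi, hj, ⟨φ⟩⟩

end Classification

section Forbidden

variable {V W α : Type*}

def IsForbiddenFree (G : SimpleGraph V) : Prop :=
  HFree G g2P1'2P2 ∧ HFree G g2P1'P4 ∧ HFree G g4P1'P2 ∧ HFree G g3P2 ∧ HFree G g2P3

def IsIndContainedInMaximal (G : SimpleGraph V) : Prop :=
  G ⊴ gK13'3P1 ∨ G ⊴ gK13'P2 ∨ G ⊴ gP1'S113 ∨ G ⊴ gS123

theorem IsForbiddenFree.anti {G : SimpleGraph V} {H : SimpleGraph W} (hG : IsForbiddenFree G)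
    (hHG : H ⊴ G) : IsForbiddenFree H :=
  let ⟨h₁, h₂, h₃, h₄, h₅⟩ := hG
  ⟨h₁.anti hHG, h₂.anti hHG, h₃.anti hHG, h₄.anti hHG, h₅.anti hHG⟩

theorem IsIndContainedInMaximal.anti {G : SimpleGraph V} {H : SimpleGraph W}
    (hG : IsIndContainedInMaximal G) (hHG : H ⊴ G) : IsIndContainedInMaximal H :=
  hG.imp hHG.trans (Or.imp hHG.trans (Or.imp hHG.trans hHG.trans))

theorem hFree_of_forall_not_adj {G : SimpleGraph V} (hG : ∀ u v, ¬ G.Adj u v)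
    {X : SimpleGraph α} {a b : α} (hab : X.Adj a b) : HFree G X :=
  hFree_iff_not_isIndContained.2 fun ⟨e⟩ => hG _ _ (e.map_adj_iff.2 hab)

theorem isForbiddenFree_of_forall_not_adj {G : SimpleGraph V} (hG : ∀ u v, ¬ G.Adj u v) :
    IsForbiddenFree G :=
  ⟨hFree_of_forall_not_adj hG (a := 2) (b := 3) (by decide),
    hFree_of_forall_not_adj hG (a := 2) (b := 3) (by decide),
    hFree_of_forall_not_adj hG (a := 4) (b := 5) (by decide),
    hFree_of_forall_not_adj hG (a := 0) (b := 1) (by decide),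
    hFree_of_forall_not_adj hG (a := 0) (b := 1) (by decide)⟩

theorem isForbiddenFree_gK13'3P1 : IsForbiddenFree gK13'3P1 := by
  refine ⟨?_, ?_, ?_, ?_, ?_⟩ <;> exact hFree_of_forall_isExtension (by decide +kernel)

theorem isForbiddenFree_gK13'P2 : IsForbiddenFree gK13'P2 := by
  refine ⟨?_, ?_, ?_, ?_, ?_⟩ <;> exact hFree_of_forall_isExtension (by decide +kernel)

theorem isForbiddenFree_gP1'S113 : IsForbiddenFree gP1'S113 := by
  refine ⟨?_, ?_, ?_, ?_, ?_⟩ <;> exact hFree_of_forall_isExtension (by decide +kernel)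

theorem isForbiddenFree_gS123 : IsForbiddenFree gS123 := by
  refine ⟨?_, ?_, ?_, ?_, ?_⟩ <;> exact hFree_of_forall_isExtension (by decide +kernel)

theorem IsIndContainedInMaximal.isForbiddenFree {G : SimpleGraph V}
    (hG : IsIndContainedInMaximal G) : IsForbiddenFree G := by
  rcases hG with h | h | h | h
  exacts [isForbiddenFree_gK13'3P1.anti h, isForbiddenFree_gK13'P2.anti h,
    isForbiddenFree_gP1'S113.anti h, isForbiddenFree_gS123.anti h]

end Forbidden

section Models

variable {α β γ : Type*} {A : SimpleGraph α} {X : SimpleGraph β} {T : SimpleGraph γ}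

theorem sum_emptyGraph_isIndContained_of_hFree {k : ℕ} (m : ℕ)
    (hT : A ⊕g emptyGraph (Fin m) ⊴ T) (hX : X ⊴ A ⊕g emptyGraph (Fin (m + 1)))
    (hfree : HFree (A ⊕g emptyGraph (Fin k)) X) : A ⊕g emptyGraph (Fin k) ⊴ T := by
  have hk : k ≤ m := by
    by_contra! hk
    exact hFree_iff_not_isIndContained.1 hfree (hX.trans (sum_emptyGraph_isIndContained hk))
  exact (sum_emptyGraph_isIndContained hk).trans hT

theorem not_hFree_sum_emptyGraph {k : ℕ} (hX : X ⊴ A) : ¬ HFree (A ⊕g emptyGraph (Fin k)) X :=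
  fun hfree => hFree_iff_not_isIndContained.1 hfree (hX.trans ⟨Embedding.sumInl⟩)

theorem IsForbiddenFree.isIndContainedInMaximal_pathGraph_sum {r k : ℕ} (hr₂ : 2 ≤ r)
    (hr₆ : r ≤ 6) (hF : IsForbiddenFree (pathGraph r ⊕g emptyGraph (Fin k))) :
    IsIndContainedInMaximal (pathGraph r ⊕g emptyGraph (Fin k)) := by
  obtain ⟨-, h2P1'P4, h4P1'P2, -, -⟩ := hF
  interval_cases r
  · exact .inl <| sum_emptyGraph_isIndContained_of_hFree 3
      (isIndContained_of_adj_iff (Sum.elim ![0, 1] ![4, 5, 6]))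
      (isIndContained_of_adj_iff ![.inr 0, .inr 1, .inr 2, .inr 3, .inl 0, .inl 1]) h4P1'P2
  · exact .inl <| sum_emptyGraph_isIndContained_of_hFree 3
      (isIndContained_of_adj_iff (Sum.elim ![1, 0, 2] ![4, 5, 6]))
      (isIndContained_of_adj_iff ![.inr 0, .inr 1, .inr 2, .inr 3, .inl 0, .inl 1]) h4P1'P2
  · exact .inr <| .inr <| .inl <| sum_emptyGraph_isIndContained_of_hFree 1
      (isIndContained_of_adj_iff (Sum.elim ![1, 4, 5, 6] ![0]))
      (isIndContained_of_adj_iff ![.inr 0, .inr 1, .inl 0, .inl 1, .inl 2, .inl 3]) h2P1'P4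
  · exact .inr <| .inr <| .inl <| sum_emptyGraph_isIndContained_of_hFree 1
      (isIndContained_of_adj_iff (Sum.elim ![2, 1, 4, 5, 6] ![0]))
      (isIndContained_of_adj_iff ![.inr 0, .inr 1, .inl 0, .inl 1, .inl 2, .inl 3]) h2P1'P4
  · exact .inr <| .inr <| .inr <| sum_emptyGraph_isIndContained_of_hFree 0
      (isIndContained_of_adj_iff (Sum.elim ![3, 2, 0, 4, 5, 6] ![]))
      (isIndContained_of_adj_iff ![.inl 5, .inr 0, .inl 0, .inl 1, .inl 2, .inl 3]) h2P1'P4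

theorem IsForbiddenFree.isIndContainedInMaximal_subdividedClaw_sum {i j k : ℕ} (hi : 1 ≤ i)
    (hij : i ≤ j) (hi₂ : i ≤ 2) (hj₃ : j ≤ 3)
    (hF : IsForbiddenFree (subdividedClaw 1 i j ⊕g emptyGraph (Fin k))) :
    IsIndContainedInMaximal (subdividedClaw 1 i j ⊕g emptyGraph (Fin k)) := by
  obtain ⟨h2P1'2P2, h2P1'P4, h4P1'P2, -, -⟩ := hF
  interval_cases i <;> interval_cases j
  · exact .inl <| sum_emptyGraph_isIndContained_of_hFree 3
      (isIndContained_of_adj_iff (Sum.elim ![0, 1, 2, 3] ![4, 5, 6]))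
      (isIndContained_of_adj_iff ![.inr 0, .inr 1, .inr 2, .inr 3, .inl 0, .inl 1]) h4P1'P2
  · exact .inr <| .inr <| .inl <| sum_emptyGraph_isIndContained_of_hFree 1
      (isIndContained_of_adj_iff (Sum.elim ![1, 2, 3, 4, 5] ![0]))
      (isIndContained_of_adj_iff ![.inr 0, .inr 1, .inl 1, .inl 0, .inl 3, .inl 4]) h2P1'P4
  · exact .inr <| .inr <| .inl <| sum_emptyGraph_isIndContained_of_hFree 1
      (isIndContained_of_adj_iff (Sum.elim ![1, 2, 3, 4, 5, 6] ![0]))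
      (isIndContained_of_adj_iff ![.inr 0, .inr 1, .inl 1, .inl 0, .inl 3, .inl 4]) h2P1'P4
  · exact .inr <| .inr <| .inr <| sum_emptyGraph_isIndContained_of_hFree 0
      (isIndContained_of_adj_iff (Sum.elim ![0, 1, 2, 3, 4, 5] ![]))
      (isIndContained_of_adj_iff ![.inl 1, .inr 0, .inl 2, .inl 3, .inl 4, .inl 5]) h2P1'2P2
  · exact .inr <| .inr <| .inr <| sum_emptyGraph_isIndContained_of_hFree 0
      (isIndContained_of_adj_iff (Sum.elim ![0, 1, 2, 3, 4, 5, 6] ![]))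
      (isIndContained_of_adj_iff ![.inl 5, .inr 0, .inl 1, .inl 0, .inl 2, .inl 3]) h2P1'P4

theorem IsForbiddenFree.isIndContainedInMaximal_pathGraph_sum_pathGraph_two_sum {r k : ℕ}
    (hr₂ : 2 ≤ r) (hr₆ : r ≤ 6)
    (hF : IsForbiddenFree ((pathGraph r ⊕g pathGraph 2) ⊕g emptyGraph (Fin k))) :
    IsIndContainedInMaximal ((pathGraph r ⊕g pathGraph 2) ⊕g emptyGraph (Fin k)) := by
  obtain ⟨h2P1'2P2, -, -, h3P2, -⟩ := hF
  interval_cases r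
  · exact .inr <| .inr <| .inl <| sum_emptyGraph_isIndContained_of_hFree 1
      (isIndContained_of_adj_iff (Sum.elim (Sum.elim ![1, 2] ![5, 6]) ![0]))
      (isIndContained_of_adj_iff ![.inr 0, .inr 1, .inl (.inl 0), .inl (.inl 1), .inl (.inr 0),
        .inl (.inr 1)]) h2P1'2P2
  · exact .inr <| .inr <| .inl <| sum_emptyGraph_isIndContained_of_hFree 1
      (isIndContained_of_adj_iff (Sum.elim (Sum.elim ![2, 1, 3] ![5, 6]) ![0]))
      (isIndContained_of_adj_iff ![.inr 0, .inr 1, .inl (.inl 0), .inl (.inl 1), .inl (.inr 0),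
        .inl (.inr 1)]) h2P1'2P2
  · exact .inr <| .inr <| .inr <| sum_emptyGraph_isIndContained_of_hFree 0
      (isIndContained_of_adj_iff (Sum.elim (Sum.elim ![1, 0, 2, 3] ![5, 6]) ![]))
      (isIndContained_of_adj_iff ![.inr 0, .inl (.inl 3), .inl (.inl 0), .inl (.inl 1),
        .inl (.inr 0), .inl (.inr 1)]) h2P1'2P2
  · exact (not_hFree_sum_emptyGraph
      (isIndContained_of_adj_iff ![.inl 0, .inl 1, .inl 3, .inl 4, .inr 0, .inr 1]) h3P2).elim
  · exact (not_hFree_sum_emptyGraph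
      (isIndContained_of_adj_iff ![.inl 0, .inl 1, .inl 3, .inl 4, .inr 0, .inr 1]) h3P2).elim

theorem IsForbiddenFree.isIndContainedInMaximal_subdividedClaw_sum_pathGraph_two_sum
    {i j k : ℕ} (hi : 1 ≤ i) (hij : i ≤ j) (hi₂ : i ≤ 2) (hj₃ : j ≤ 3)
    (hF : IsForbiddenFree ((subdividedClaw 1 i j ⊕g pathGraph 2) ⊕g emptyGraph (Fin k))) :
    IsIndContainedInMaximal ((subdividedClaw 1 i j ⊕g pathGraph 2) ⊕g emptyGraph (Fin k)) := by
  obtain ⟨h2P1'2P2, -, h4P1'P2, h3P2, -⟩ := hF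
  interval_cases i <;> interval_cases j
  · exact .inr <| .inl <| sum_emptyGraph_isIndContained_of_hFree 0
      (isIndContained_of_adj_iff (Sum.elim (Sum.elim ![0, 1, 2, 3] ![4, 5]) ![]))
      (isIndContained_of_adj_iff ![.inl (.inl 1), .inl (.inl 2), .inl (.inl 3), .inr 0,
        .inl (.inr 0), .inl (.inr 1)]) h4P1'P2
  · exact (not_hFree_sum_emptyGraph
      (isIndContained_of_adj_iff ![.inl 1, .inl 2, .inl 3, .inl 4, .inr 0, .inr 1]) h2P1'2P2).elim
  · exact (not_hFree_sum_emptyGraph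
      (isIndContained_of_adj_iff ![.inl 1, .inl 2, .inl 3, .inl 4, .inr 0, .inr 1]) h2P1'2P2).elim
  · exact (not_hFree_sum_emptyGraph
      (isIndContained_of_adj_iff ![.inl 2, .inl 3, .inl 4, .inl 5, .inr 0, .inr 1]) h3P2).elim
  · exact (not_hFree_sum_emptyGraph
      (isIndContained_of_adj_iff ![.inl 2, .inl 3, .inl 5, .inl 6, .inr 0, .inr 1]) h3P2).elim

end Models

section Structure

variable {V : Type*} {H : SimpleGraph V}

theorem HFree.mem_union_of_adj (h3P2 : HFree H g3P2) {x₁ y₁ x₂ y₂ : V} (h₁ : H.Adj x₁ y₁)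
    (h₂ : H.Adj x₂ y₂) (hne : H.connectedComponentMk x₁ ≠ H.connectedComponentMk x₂) :
    ∀ u v, H.Adj u v → u ∈ (H.connectedComponentMk x₁).supp ∪ (H.connectedComponentMk x₂).supp := by
  intro u v huv
  by_contra hu
  rw [Set.mem_union, not_or] at hu
  have hsep : ∀ a ∈ (H.connectedComponentMk x₁).supp ∪ (H.connectedComponentMk x₂).supp,
      ∀ b ∈ (H.connectedComponentMk u).supp, ¬ H.Reachable a b := by
    rintro a (ha | ha) b hb
    exacts [ConnectedComponent.not_reachable_of_ne (fun h => hu.1 h.symm) ha hb,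
      ConnectedComponent.not_reachable_of_ne (fun h => hu.2 h.symm) ha hb]
  have hP2 {x y : V} (h : H.Adj x y) : pathGraph 2 ⊴ H.induce (H.connectedComponentMk x).supp :=
    ConnectedComponent.pathGraph_two_isIndContained_induce rfl h
  have h3P2' : g3P2 ⊴ (pathGraph 2 ⊕g pathGraph 2) ⊕g pathGraph 2 :=
    isIndContained_of_adj_iff
      ![.inl (.inl 0), .inl (.inl 1), .inl (.inr 0), .inl (.inr 1), .inr 0, .inr 1]
  exact hFree_iff_not_isIndContained.1 h3P2 <| h3P2'.trans <| (sum_isIndContained_induce_union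
    hsep (sum_isIndContained_induce_union (fun a ha b hb =>
      ConnectedComponent.not_reachable_of_ne hne ha hb) (hP2 h₁) (hP2 h₂)) (hP2 huv)).trans
    (induce_isIndContained _)

theorem HFree.not_pathGraph_three_isIndContained_induce (h2P3 : HFree H g2P3)
    {c c' : H.ConnectedComponent} (hne : c ≠ c') (h : pathGraph 3 ⊴ H.induce c.supp) :
    ¬ pathGraph 3 ⊴ H.induce c'.supp := fun h' =>
  have h2P3' : g2P3 ⊴ pathGraph 3 ⊕g pathGraph 3 :=
    isIndContained_of_adj_iff ![.inl 0, .inl 1, .inl 2, .inr 0, .inr 1, .inr 2]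
  hFree_iff_not_isIndContained.1 h2P3 <| h2P3'.trans <| (sum_isIndContained_induce_union
    (fun a ha b hb => ConnectedComponent.not_reachable_of_ne hne ha hb) h h').trans
    (induce_isIndContained _)

theorem IsForbiddenFree.isIndContainedInMaximal_of_iso {W : Type*} {M : SimpleGraph W}
    (hF : IsForbiddenFree H) (e : H ≃g M)
    (hM : IsForbiddenFree M → IsIndContainedInMaximal M) : IsIndContainedInMaximal H :=
  (hM (hF.anti e.symm.isIndContained)).anti e.isIndContained

theorem IsForbiddenFree.isIndContainedInMaximal_of_forall_adj_mem [Finite V] (hS : InClassS H)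
    (hF : IsForbiddenFree H) {c : H.ConnectedComponent} {x y : V} (hx : x ∈ c.supp)
    (hxy : H.Adj x y) (hc : ∀ u v, H.Adj u v → u ∈ c.supp) : IsIndContainedInMaximal H := by
  obtain ⟨k, ⟨e⟩⟩ := exists_iso_induce_sum_emptyGraph c.supp hc
  rcases hS.exists_iso_pathGraph_or_subdividedClaw hF.2.2.2.1 hF.2.2.2.2 hx hxy with
    ⟨r, hr₂, hr₆, ⟨φ⟩⟩ | ⟨i, j, hi, hij, hi₂, hj₃, ⟨φ⟩⟩
  · exact hF.isIndContainedInMaximal_of_iso (e.trans (Iso.sumCongr φ Iso.refl)) fun hM =>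
      hM.isIndContainedInMaximal_pathGraph_sum hr₂ hr₆
  · exact hF.isIndContainedInMaximal_of_iso (e.trans (Iso.sumCongr φ Iso.refl)) fun hM =>
      hM.isIndContainedInMaximal_subdividedClaw_sum hi hij hi₂ hj₃

theorem IsForbiddenFree.isIndContainedInMaximal_of_forall_adj_mem_union [Finite V]
    (hS : InClassS H) (hF : IsForbiddenFree H) {c c' : H.ConnectedComponent} {x y : V}
    (hx : x ∈ c.supp) (hxy : H.Adj x y) (hne : c ≠ c')
    (hc' : Nonempty (H.induce c'.supp ≃g pathGraph 2))
    (hc : ∀ u v, H.Adj u v → u ∈ c.supp ∪ c'.supp) : IsIndContainedInMaximal H := by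
  obtain ⟨ψ⟩ := hc'
  obtain ⟨k, ⟨e⟩⟩ := exists_iso_induce_sum_emptyGraph _ hc
  have e₂ := Iso.induceUnionOfNotReachable fun a ha b hb =>
    ConnectedComponent.not_reachable_of_ne hne ha hb
  rcases hS.exists_iso_pathGraph_or_subdividedClaw hF.2.2.2.1 hF.2.2.2.2 hx hxy with
    ⟨r, hr₂, hr₆, ⟨φ⟩⟩ | ⟨i, j, hi, hij, hi₂, hj₃, ⟨φ⟩⟩
  · refine hF.isIndContainedInMaximal_of_iso
      (e.trans (Iso.sumCongr (e₂.trans (Iso.sumCongr φ ψ)) Iso.refl)) fun hM => ?_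
    exact hM.isIndContainedInMaximal_pathGraph_sum_pathGraph_two_sum hr₂ hr₆
  · refine hF.isIndContainedInMaximal_of_iso
      (e.trans (Iso.sumCongr (e₂.trans (Iso.sumCongr φ ψ)) Iso.refl)) fun hM => ?_
    exact hM.isIndContainedInMaximal_subdividedClaw_sum_pathGraph_two_sum hi hij hi₂ hj₃

theorem IsForbiddenFree.isIndContainedInMaximal [Finite V] (hS : InClassS H)
    (hF : IsForbiddenFree H) {x y : V} (hxy : H.Adj x y) : IsIndContainedInMaximal H := by
  by_cases hc : ∀ u v, H.Adj u v → u ∈ (H.connectedComponentMk x).supp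
  · exact hF.isIndContainedInMaximal_of_forall_adj_mem hS rfl hxy hc
  push Not at hc
  obtain ⟨u, v, huv, hu⟩ := hc
  have hne : H.connectedComponentMk x ≠ H.connectedComponentMk u := fun h => hu h.symm
  have hcover := hF.2.2.2.1.mem_union_of_adj hxy huv hne
  rcases hS.nonempty_iso_pathGraph_two_or_isIndContained rfl hxy with hx₂ | hx₃
  · exact hF.isIndContainedInMaximal_of_forall_adj_mem_union hS rfl huv hne.symm hx₂
      fun a b hab => Set.union_comm _ _ ▸ hcover a b hab
  rcases hS.nonempty_iso_pathGraph_two_or_isIndContained rfl huv with hu₂ | hu₃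
  · exact hF.isIndContainedInMaximal_of_forall_adj_mem_union hS rfl hxy hne hu₂ hcover
  · exact (hF.2.2.2.2.not_pathGraph_three_isIndContained_induce hne hx₃ hu₃).elim

end Structure

/-- Let `H ∈ S`. Then `H` is `(2P_1+2P_2, 2P_1+P_4, 4P_1+P_2, 3P_2, 2P_3)`-free
if and only if `H` is isomorphic to `sP_1` for some `s ≥ 1` or `H` is isomorphic
to an induced subgraph of one of `K_{1,3}+3P_1`, `K_{1,3}+P_2`, `P_1+S_{1,1,3}`,
`S_{1,2,3}`. -/
theorem stmt_8 {V : Type*} [Fintype V] (H : SimpleGraph V) (hS : InClassS H) :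
    (HFree H g2P1'2P2 ∧ HFree H g2P1'P4 ∧ HFree H g4P1'P2 ∧
      HFree H g3P2 ∧ HFree H g2P3) ↔
    ((∃ s : ℕ, 1 ≤ s ∧ Nonempty (H ≃g (⊥ : SimpleGraph (Fin s)))) ∨
      Nonempty (H ↪g gK13'3P1) ∨ Nonempty (H ↪g gK13'P2) ∨
      Nonempty (H ↪g gP1'S113) ∨ Nonempty (H ↪g gS123)) := by
  refine ⟨fun hF => ?_, ?_⟩
  · by_cases hE : ∃ x y, H.Adj x y
    · obtain ⟨x, y, hxy⟩ := hE
      exact .inr (IsForbiddenFree.isIndContainedInMaximal hS hF hxy)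
    push Not at hE
    cases isEmpty_or_nonempty V
    · exact .inr (.inr (.inr (.inr IsIndContained.of_isEmpty)))
    · exact .inl ⟨_, Fintype.card_pos, ⟨Iso.emptyGraphOfForallNotAdj hE⟩⟩
  · rintro (⟨s, -, ⟨e⟩⟩ | hT)
    · exact (isForbiddenFree_of_forall_not_adj fun _ _ => id).anti e.isIndContained
    · exact IsIndContainedInMaximal.isForbiddenFree hT
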